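/- arXiv:2503.11987 — 3 statements merged into one kernel-verified Lean document; each statement's English description precedes it below -/
import Mathlib

section
/- Let Λ = gR^d ⊆ K∞^d be a lattice (g ∈ GL_d(K∞), R = F_q[x]), N ∈ ℕ, and let α ∈ K∞^d be N-irrational with respect to Λ (i.e., Qα ∉ Λ for all nonzero Q ∈ R with deg Q ≤ N). Let D_Λ = g·m^d where m = x^{-1}F_q[[x^{-1}]]. Then the set D_Λ ∩ Λ(α, q^N), where Λ(α, q^N) = ⋃_{deg Q ≤ N} (Qα + Λ), has exactly q^{N+1} elements. -/
open scoped Classical Pointwise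

noncomputable section

variable (Fq : Type*) [Field Fq] [Fintype Fq]

/-- `K∞ = F_q((x⁻¹))`, modeled as Laurent series in the variable `X = x⁻¹`. -/
abbrev Kinf := LaurentSeries Fq

/-- The absolute value `|Σ_{n≥n₀} a_n x^{-n}| = q^{-n₀}` (here the exponent of `X = x⁻¹`
is the order of the Hahn series). -/
def absv (α : Kinf Fq) : ℝ :=
  if α = 0 then 0 else (Fintype.card Fq : ℝ) ^ (-(α.order))

/-- The supremum norm on `K∞^d`. -/
def snorm {d : ℕ} (v : Fin d → Kinf Fq) : ℝ := ⨆ i, absv Fq (v i)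

/-- The closed ball of radius `r` for the supremum norm. -/
def ball (d : ℕ) (r : ℝ) : Set (Fin d → Kinf Fq) := {v | snorm Fq v ≤ r}

/-- The element `x = X⁻¹` of `K∞`. -/
def xe : Kinf Fq := HahnSeries.single (-1 : ℤ) 1

/-- Evaluation of a polynomial at `x`, i.e. the embedding `F_q[x] → K∞`. -/
def pe (P : Polynomial Fq) : Kinf Fq := Polynomial.aeval (xe Fq) P

/-- The image of `R = F_q[x]` inside `K∞`. -/
def Rset : Set (Kinf Fq) := Set.range (pe Fq)

/-- The fractional part `⟨β⟩`: the part of the Laurent series with negative powers of `x`,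
i.e. positive powers of `X`. -/
def frac (β : Kinf Fq) : Kinf Fq where
  coeff n := if 1 ≤ n then β.coeff n else 0
  isPWO_support' := β.isPWO_support'.mono (fun n hn => by
    by_cases h : (1:ℤ) ≤ n <;> simpa [Function.mem_support, h] using hn)

/-- The lattice `Λ = g R^d`. -/
def latt {d : ℕ} (g : GL (Fin d) (Kinf Fq)) : Set (Fin d → Kinf Fq) :=
  (fun v => (g : Matrix (Fin d) (Fin d) (Kinf Fq)).mulVec v) ''
    {v | ∀ i, v i ∈ Rset Fq}

/-- The fundamental domain `D_Λ = g 𝔪^d`, where `𝔪 = {α : |α| < 1}`. -/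
def fundDom {d : ℕ} (g : GL (Fin d) (Kinf Fq)) : Set (Fin d → Kinf Fq) :=
  (fun v => (g : Matrix (Fin d) (Fin d) (Kinf Fq)).mulVec v) ''
    {v | ∀ i, absv Fq (v i) < 1}

/-- `det Λ = |det g|`; also used as the Haar measure `m(hO^d) = |det h|` of a convex body. -/
def detGL {d : ℕ} (g : GL (Fin d) (Kinf Fq)) : ℝ :=
  absv Fq (Matrix.det (g : Matrix (Fin d) (Fin d) (Kinf Fq)))

/-- The convex body `C = h O^d`, where `O = {α : |α| ≤ 1}`. -/
def body {d : ℕ} (h : GL (Fin d) (Kinf Fq)) : Set (Fin d → Kinf Fq) :=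
  (fun v => (h : Matrix (Fin d) (Fin d) (Kinf Fq)).mulVec v) ''
    {v | ∀ i, absv Fq (v i) ≤ 1}

/-- The norm induced by the convex body `C = h O^d`:
`‖v‖_C = min{r > 0 : v ∈ q^{log_q r} C} = ‖h⁻¹ v‖`. -/
def normC {d : ℕ} (h : GL (Fin d) (Kinf Fq)) (v : Fin d → Kinf Fq) : ℝ :=
  snorm Fq ((↑(h⁻¹) : Matrix (Fin d) (Fin d) (Kinf Fq)).mulVec v)

/-- The `i`-th successive minimum of `S` with respect to the norm `nrm`. -/
def succMin {d : ℕ} (nrm : (Fin d → Kinf Fq) → ℝ) (S : Set (Fin d → Kinf Fq)) (i : ℕ) : ℝ :=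
  sInf {r : ℝ | 0 < r ∧
    i ≤ Module.finrank (Kinf Fq) (Submodule.span (Kinf Fq) (S ∩ {v | nrm v ≤ r}))}

/-- The covering radius `CovRad(S) = sup_v inf_{u ∈ S} ‖v - u‖`. -/
def covRad {d : ℕ} (nrm : (Fin d → Kinf Fq) → ℝ) (S : Set (Fin d → Kinf Fq)) : ℝ :=
  ⨆ v, ⨅ u ∈ S, nrm (v - u)

/-- `S` is an `F_q`-subspace of `K∞^d`. -/
def IsSubspaceFq {d : ℕ} (S : Set (Fin d → Kinf Fq)) : Prop :=
  (0 : Fin d → Kinf Fq) ∈ S ∧ (∀ s ∈ S, ∀ t ∈ S, s + t ∈ S) ∧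
    ∀ (c : Fq), ∀ s ∈ S, (algebraMap Fq (Kinf Fq) c) • s ∈ S

/-- `S` is a Delone set: uniformly discrete and relatively dense. -/
def IsDelone {d : ℕ} (S : Set (Fin d → Kinf Fq)) : Prop :=
  (∃ ε > (0:ℝ), ∀ s ∈ S, ∀ t ∈ S, s ≠ t → ε ≤ snorm Fq (s - t)) ∧
  (∃ R > (0:ℝ), ∀ v : Fin d → Kinf Fq, ∃ s ∈ S, snorm Fq (v - s) ≤ R)

/-- `S` is a `(Λ, q^N)`-periodic lattice, where `Λ = g R^d`. -/
def IsPeriodicLattice {d : ℕ} (g : GL (Fin d) (Kinf Fq)) (N : ℕ)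
    (S : Set (Fin d → Kinf Fq)) : Prop :=
  IsSubspaceFq Fq S ∧ IsDelone Fq S ∧
    (∀ v ∈ latt Fq g, ∀ s ∈ S, v + s ∈ S) ∧
    (fundDom Fq g ∩ S).Finite ∧ (fundDom Fq g ∩ S).ncard = Fintype.card Fq ^ N

/-- `Λ(α, q^N) = ⋃_{deg Q ≤ N} (Qα + Λ)`. -/
def perLatt {d : ℕ} (g : GL (Fin d) (Kinf Fq)) (α : Fin d → Kinf Fq) (N : ℕ) :
    Set (Fin d → Kinf Fq) :=
  {w | ∃ Q : Polynomial Fq, Q.degree ≤ (N : ℕ) ∧ w - pe Fq Q • α ∈ latt Fq g}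

/-- The number of distinct translates `v + C`, `v ∈ F`.  When `C` is (a coset of)
an additive subgroup and `A` is a union of cosets of `C`, the Haar measure of `A`
is `m(C) * cosetCount C A`. -/
def cosetCount {d : ℕ} (C F : Set (Fin d → Kinf Fq)) : ℕ :=
  Set.ncard ((fun v => (v + ·) '' C) '' F)

/-- The `R`-span of vectors `v i` (used for a basis of successive minima). -/
def Rspan {d : ℕ} (v : Fin d → Fin d → Kinf Fq) : Set (Fin d → Kinf Fq) :=
  {w | ∃ a : Fin d → Polynomial Fq, w = ∑ i, pe Fq (a i) • v i}


namespace AuxCFIPL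

variable {Fq : Type*} [Field Fq] [Fintype Fq]

lemma frac_coeff (β : Kinf Fq) (n : ℤ) :
    (frac Fq β).coeff n = if 1 ≤ n then β.coeff n else 0 := rfl

lemma frac_sub (β γ : Kinf Fq) : frac Fq (β - γ) = frac Fq β - frac Fq γ := by
  ext n
  rw [HahnSeries.coeff_sub, frac_coeff, frac_coeff, frac_coeff, HahnSeries.coeff_sub]
  split <;> simp

lemma one_lt_q : (1:ℝ) < Fintype.card Fq := by exact_mod_cast Fintype.one_lt_card

lemma frac_eq_self {β : Kinf Fq} (h : absv Fq β < 1) : frac Fq β = β := by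
  by_cases hβ : β = 0
  · subst hβ; ext n; rw [frac_coeff]; split <;> simp
  · rw [absv, if_neg hβ] at h
    have hord : (1:ℤ) ≤ β.order := by
      by_contra hcon
      push_neg at hcon
      have : (0:ℤ) ≤ -β.order := by omega
      have h1 : (1:ℝ) ≤ (Fintype.card Fq : ℝ) ^ (-(β.order)) := by
        calc (1:ℝ) = (Fintype.card Fq : ℝ) ^ (0:ℤ) := by simp
        _ ≤ _ := by
          rcases eq_or_lt_of_le this with h' | h'
          · rw [← h']
          · exact le_of_lt (zpow_lt_zpow_right₀ one_lt_q h')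
      linarith
    ext n
    rw [frac_coeff]
    split
    · rfl
    · rename_i hn
      push_neg at hn
      exact (HahnSeries.coeff_eq_zero_of_lt_order (by omega)).symm

lemma absv_frac_lt_one (β : Kinf Fq) : absv Fq (frac Fq β) < 1 := by
  by_cases h : frac Fq β = 0
  · rw [absv, if_pos h]; norm_num
  · rw [absv, if_neg h]
    have hord : (1:ℤ) ≤ (frac Fq β).order := by
      by_contra hcon
      push_neg at hcon
      have := HahnSeries.coeff_order_eq_zero.not.mpr h
      rw [frac_coeff, if_neg (by omega)] at this
      exact this rfl
    calc (Fintype.card Fq : ℝ) ^ (-(frac Fq β).order)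
        < (Fintype.card Fq : ℝ) ^ (0:ℤ) := zpow_lt_zpow_right₀ one_lt_q (by omega)
      _ = 1 := by simp

lemma xe_pow (k : ℕ) : (xe Fq) ^ k = HahnSeries.single (-(k:ℤ)) 1 := by
  rw [xe, HahnSeries.single_pow]
  simp

lemma algebraMap_single (a : Fq) : algebraMap Fq (Kinf Fq) a = HahnSeries.single (0:ℤ) a := by
  rw [HahnSeries.algebraMap_apply']
  simp [PowerSeries.algebraMap_apply, HahnSeries.ofPowerSeries_C, HahnSeries.C_apply]

lemma pe_monomial (k : ℕ) (a : Fq) :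
    pe Fq (Polynomial.monomial k a) = HahnSeries.single (-(k:ℤ)) a := by
  rw [pe, Polynomial.aeval_monomial, xe_pow, algebraMap_single, HahnSeries.single_mul_single,
    zero_add, mul_one]

lemma coeff_sum {ι : Type*} (s : Finset ι) (f : ι → Kinf Fq) (n : ℤ) :
    (∑ i ∈ s, f i).coeff n = ∑ i ∈ s, (f i).coeff n := by
  classical
  induction s using Finset.induction with
  | empty => simp
  | insert _ _ h ih => rw [Finset.sum_insert h, Finset.sum_insert h, HahnSeries.coeff_add, ih]

lemma pe_coeff_pos (Q : Polynomial Fq) (n : ℤ) (hn : 0 < n) : (pe Fq Q).coeff n = 0 := by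
  rw [pe, Polynomial.aeval_eq_sum_range]
  simp only [Algebra.smul_def, algebraMap_single, xe_pow, HahnSeries.single_mul_single,
    zero_add, mul_one]
  rw [coeff_sum]
  apply Finset.sum_eq_zero
  intro j _
  rw [HahnSeries.coeff_single, if_neg (by omega)]

lemma pe_coeff_neg (Q : Polynomial Fq) (i : ℕ) : (pe Fq Q).coeff (-(i:ℤ)) = Q.coeff i := by
  rw [pe, Polynomial.aeval_eq_sum_range]
  simp only [Algebra.smul_def, algebraMap_single, xe_pow, HahnSeries.single_mul_single,
    zero_add, mul_one]
  rw [coeff_sum]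
  simp only [HahnSeries.coeff_single, neg_inj, Nat.cast_inj, Finset.sum_ite_eq]
  split_ifs with h
  · rfl
  · exact (Polynomial.coeff_eq_zero_of_natDegree_lt (by simp at h; omega)).symm

lemma pe_injective : Function.Injective (pe (Fq := Fq)) := by
  intro Q Q' h
  ext i
  rw [← pe_coeff_neg Q i, ← pe_coeff_neg Q' i, h]

lemma frac_pe (Q : Polynomial Fq) : frac Fq (pe Fq Q) = 0 := by
  ext n
  rw [frac_coeff, HahnSeries.coeff_zero]
  split_ifs with h
  · exact pe_coeff_pos Q n (by omega)
  · rfl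

lemma pe_sub (P Q : Polynomial Fq) : pe Fq (P - Q) = pe Fq P - pe Fq Q := by
  rw [pe, pe, pe, map_sub]

lemma Rset_sub {a b : Kinf Fq} (ha : a ∈ Rset Fq) (hb : b ∈ Rset Fq) :
    a - b ∈ Rset Fq := by
  obtain ⟨P, rfl⟩ := ha
  obtain ⟨Q, rfl⟩ := hb
  exact ⟨P - Q, pe_sub P Q⟩

lemma frac_of_Rset {a : Kinf Fq} (ha : a ∈ Rset Fq) : frac Fq a = 0 := by
  obtain ⟨P, rfl⟩ := ha
  exact frac_pe P

lemma sub_frac_mem_Rset (β : Kinf Fq) : β - frac Fq β ∈ Rset Fq := by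
  classical
  have hfin : (β.support ∩ Set.Iic (0:ℤ)).Finite := by
    by_cases hne : (β.support ∩ Set.Iic (0:ℤ)).Nonempty
    · have hwf : (β.support ∩ Set.Iic (0:ℤ)).IsWF :=
        β.isPWO_support.isWF.mono Set.inter_subset_left
      refine (Set.finite_Icc (hwf.min hne) 0).subset ?_
      intro n hn
      exact Set.mem_Icc.mpr ⟨hwf.min_le hne hn, hn.2⟩
    · rw [Set.not_nonempty_iff_eq_empty] at hne
      rw [hne]; exact Set.finite_empty
  refine ⟨∑ n ∈ hfin.toFinset, Polynomial.monomial (-n).toNat (β.coeff n), ?_⟩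
  have hpe : pe Fq (∑ n ∈ hfin.toFinset, Polynomial.monomial (-n).toNat (β.coeff n))
      = ∑ n ∈ hfin.toFinset, HahnSeries.single n (β.coeff n) := by
    rw [pe, map_sum]
    apply Finset.sum_congr rfl
    intro n hn
    rw [Set.Finite.mem_toFinset] at hn
    have hn0 : n ≤ 0 := hn.2
    rw [← pe, pe_monomial, Int.toNat_of_nonneg (by omega : (0:ℤ) ≤ -n), neg_neg]
  rw [hpe]
  ext m
  rw [coeff_sum, HahnSeries.coeff_sub, frac_coeff]
  by_cases hm : 1 ≤ m
  · rw [if_pos hm, sub_self]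
    apply Finset.sum_eq_zero
    intro n hn
    rw [Set.Finite.mem_toFinset] at hn
    have hn0 : n ≤ 0 := hn.2
    rw [HahnSeries.coeff_single, if_neg (by omega)]
  · rw [if_neg hm, sub_zero]
    by_cases hz : β.coeff m = 0
    · rw [hz]
      apply Finset.sum_eq_zero
      intro n hn
      rw [HahnSeries.coeff_single]
      split_ifs with h
      · rw [← h]; exact hz
      · rfl
    · have hmem : m ∈ hfin.toFinset := by
        rw [Set.Finite.mem_toFinset]
        exact ⟨hz, Set.mem_Iic.mpr (by omega)⟩
      rw [Finset.sum_eq_single_of_mem m hmem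
        (fun n _ hne => by rw [HahnSeries.coeff_single, if_neg (fun h => hne h.symm)])]
      rw [HahnSeries.coeff_single, if_pos rfl]

variable {d : ℕ}

lemma gl_cancel (g : GL (Fin d) (Kinf Fq)) (v : Fin d → Kinf Fq) :
    (↑g : Matrix (Fin d) (Fin d) (Kinf Fq)).mulVec
      ((↑g⁻¹ : Matrix (Fin d) (Fin d) (Kinf Fq)).mulVec v) = v := by
  rw [Matrix.mulVec_mulVec]
  have : (↑g : Matrix (Fin d) (Fin d) (Kinf Fq)) * (↑(g⁻¹) : Matrix (Fin d) (Fin d) (Kinf Fq)) = 1 := by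
    rw [← Units.val_mul, mul_inv_cancel, Units.val_one]
  rw [this, Matrix.one_mulVec]

lemma gl_cancel' (g : GL (Fin d) (Kinf Fq)) (v : Fin d → Kinf Fq) :
    (↑g⁻¹ : Matrix (Fin d) (Fin d) (Kinf Fq)).mulVec
      ((↑g : Matrix (Fin d) (Fin d) (Kinf Fq)).mulVec v) = v := by
  rw [Matrix.mulVec_mulVec]
  have : (↑(g⁻¹) : Matrix (Fin d) (Fin d) (Kinf Fq)) * (↑g : Matrix (Fin d) (Fin d) (Kinf Fq)) = 1 := by
    rw [← Units.val_mul, inv_mul_cancel, Units.val_one]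
  rw [this, Matrix.one_mulVec]

lemma latt_sub {g : GL (Fin d) (Kinf Fq)} {w₁ w₂ : Fin d → Kinf Fq}
    (h1 : w₁ ∈ latt Fq g) (h2 : w₂ ∈ latt Fq g) : w₁ - w₂ ∈ latt Fq g := by
  obtain ⟨p1, hp1, rfl⟩ := h1
  obtain ⟨p2, hp2, rfl⟩ := h2
  exact ⟨p1 - p2, fun i => Rset_sub (hp1 i) (hp2 i), Matrix.mulVec_sub _ _ _⟩

lemma latt_zero (g : GL (Fin d) (Kinf Fq)) : (0 : Fin d → Kinf Fq) ∈ latt Fq g :=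
  ⟨0, fun i => ⟨0, by rw [pe, map_zero]; rfl⟩, Matrix.mulVec_zero _⟩

/-- The reduction of `v` modulo the lattice, landing in the fundamental domain. -/
def red (g : GL (Fin d) (Kinf Fq)) (v : Fin d → Kinf Fq) : Fin d → Kinf Fq :=
  (↑g : Matrix (Fin d) (Fin d) (Kinf Fq)).mulVec
    (fun i => frac Fq ((↑g⁻¹ : Matrix (Fin d) (Fin d) (Kinf Fq)).mulVec v i))

lemma red_mem_fundDom (g : GL (Fin d) (Kinf Fq)) (v : Fin d → Kinf Fq) :
    red g v ∈ fundDom Fq g :=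
  ⟨_, fun i => absv_frac_lt_one _, rfl⟩

lemma sub_red_mem_latt (g : GL (Fin d) (Kinf Fq)) (v : Fin d → Kinf Fq) :
    v - red g v ∈ latt Fq g := by
  refine ⟨(fun i => (↑g⁻¹ : Matrix (Fin d) (Fin d) (Kinf Fq)).mulVec v i
      - frac Fq ((↑g⁻¹ : Matrix (Fin d) (Fin d) (Kinf Fq)).mulVec v i)),
    fun i => sub_frac_mem_Rset _, ?_⟩
  show (↑g : Matrix (Fin d) (Fin d) (Kinf Fq)).mulVec
      ((↑g⁻¹ : Matrix (Fin d) (Fin d) (Kinf Fq)).mulVec v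
        - (fun i => frac Fq ((↑g⁻¹ : Matrix (Fin d) (Fin d) (Kinf Fq)).mulVec v i))) = v - red g v
  rw [Matrix.mulVec_sub, gl_cancel]
  rfl

lemma red_unique {g : GL (Fin d) (Kinf Fq)} {w v : Fin d → Kinf Fq}
    (hw : w ∈ fundDom Fq g) (hl : w - v ∈ latt Fq g) : w = red g v := by
  obtain ⟨mm, hm, rfl⟩ := hw
  obtain ⟨p, hp, hps⟩ := hl
  have hv : v = (↑g : Matrix (Fin d) (Fin d) (Kinf Fq)).mulVec (mm - p) := by
    rw [Matrix.mulVec_sub]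
    have := hps
    rw [eq_sub_iff_add_eq, ← eq_sub_iff_add_eq'] at this
    rw [← this]
  have harg : (fun i => frac Fq ((↑g⁻¹ : Matrix (Fin d) (Fin d) (Kinf Fq)).mulVec v i)) = mm := by
    funext i
    have hgv : (↑g⁻¹ : Matrix (Fin d) (Fin d) (Kinf Fq)).mulVec v = mm - p := by
      rw [hv, gl_cancel']
    rw [hgv]
    show frac Fq (mm i - p i) = mm i
    rw [frac_sub, frac_eq_self (hm i), frac_of_Rset (hp i), sub_zero]
  show (↑g : Matrix (Fin d) (Fin d) (Kinf Fq)).mulVec mm = red g v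
  rw [red, harg]

end AuxCFIPL

/-- If `α` is `N`-irrational with respect to `Λ`, then `#(D_Λ ∩ Λ(α, q^N)) = q^(N+1)`. -/
theorem card_fundDom_inter_perLatt (d : ℕ) (g : GL (Fin d) (Kinf Fq)) (N : ℕ)
    (α : Fin d → Kinf Fq)
    (hirr : ∀ Q : Polynomial Fq, Q ≠ 0 → Q.degree ≤ (N : ℕ) → pe Fq Q • α ∉ latt Fq g) :
    (fundDom Fq g ∩ perLatt Fq g α N).ncard = Fintype.card Fq ^ (N + 1) := by
  classical
  set f : Polynomial Fq → (Fin d → Kinf Fq) := fun Q => AuxCFIPL.red g (pe Fq Q • α) with hf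
  set S : Set (Polynomial Fq) := {Q | Q.degree ≤ (N:ℕ)} with hS
  have hset : fundDom Fq g ∩ perLatt Fq g α N = f '' S := by
    ext w
    constructor
    · rintro ⟨hwD, Q, hQdeg, hQl⟩
      exact ⟨Q, hQdeg, (AuxCFIPL.red_unique hwD hQl).symm⟩
    · rintro ⟨Q, hQ, rfl⟩
      refine ⟨AuxCFIPL.red_mem_fundDom g _, Q, hQ, ?_⟩
      have h0 := AuxCFIPL.latt_sub (AuxCFIPL.latt_zero g)
        (AuxCFIPL.sub_red_mem_latt g (pe Fq Q • α))
      simpa using h0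
  have hinj : S.InjOn f := by
    intro Q hQ Q' hQ' heq
    by_contra hne
    have h1 := AuxCFIPL.sub_red_mem_latt g (pe Fq Q • α)
    have h2 := AuxCFIPL.sub_red_mem_latt g (pe Fq Q' • α)
    have hmem : pe Fq (Q - Q') • α ∈ latt Fq g := by
      have h3 := AuxCFIPL.latt_sub h1 h2
      have heq' : AuxCFIPL.red g (pe Fq Q • α) = AuxCFIPL.red g (pe Fq Q' • α) := heq
      rw [heq', sub_sub_sub_cancel_right] at h3
      have hfun : pe Fq (Q - Q') • α = pe Fq Q • α - pe Fq Q' • α := by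
        funext i
        show pe Fq (Q - Q') • α i = pe Fq Q • α i - pe Fq Q' • α i
        rw [AuxCFIPL.pe_sub, smul_eq_mul, smul_eq_mul, smul_eq_mul, sub_mul]
      rw [hfun]
      exact h3
    exact hirr _ (sub_ne_zero.mpr hne)
      (le_trans (Polynomial.degree_sub_le _ _) (max_le hQ hQ')) hmem
  rw [hset, Set.ncard_image_of_injOn hinj]
  have hSeq : S = (Polynomial.degreeLT Fq (N+1) : Set (Polynomial Fq)) := by
    ext Q
    simp only [hS, Set.mem_setOf_eq, SetLike.mem_coe, Polynomial.mem_degreeLT]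
    constructor
    · intro h
      refine lt_of_le_of_lt h ?_
      exact_mod_cast Nat.lt_succ_self N
    · intro h
      by_cases hQ0 : Q = 0
      · simp [hQ0]
      · rw [Polynomial.degree_eq_natDegree hQ0] at h ⊢
        exact_mod_cast Nat.lt_succ_iff.mp (by exact_mod_cast h)
  rw [hSeq, ← Nat.card_coe_set_eq]
  have hcard : Nat.card ↥(Polynomial.degreeLT Fq (N+1)) = Fintype.card Fq ^ (N + 1) := by
    rw [Nat.card_congr (Polynomial.degreeLTEquiv Fq (N+1)).toEquiv]
    simp [Nat.card_eq_fintype_card, Fintype.card_fun]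
  exact hcard

end
end

section
/- Let w₁, …, w_d ∈ K∞^d be linearly independent vectors with ‖w₁‖ ≤ ‖w₂‖ ≤ … ≤ ‖w_d‖, and suppose S ⊆ K∞^d is an F_q-subspace such that ‖s‖ ≥ ‖w_i‖ for every s ∈ S not contained in span_{K∞}(w₁, …, w_{i-1}), for each i. If s ∈ S can be written s = Σ_{i=1}^d γ_i w_i with all γ_i ∈ m = x^{-1}F_q[[x^{-1}]], then s = 0. -/
open scoped Classical Pointwise

noncomputable section

variable (Fq : Type*) [Field Fq] [Fintype Fq]

section AuxForMain

variable {Fq : Type*} [Field Fq] [Fintype Fq]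

lemma absv_nonneg' (a : Kinf Fq) : 0 ≤ absv Fq a := by
  unfold absv
  split
  · exact le_rfl
  · positivity

lemma absv_pos' {a : Kinf Fq} (ha : a ≠ 0) : 0 < absv Fq a := by
  unfold absv
  rw [if_neg ha]
  have : (0:ℝ) < (Fintype.card Fq : ℝ) := by positivity
  positivity

lemma absv_zero' : absv Fq (0 : Kinf Fq) = 0 := by simp [absv]

lemma absv_mul' (a b : Kinf Fq) : absv Fq (a * b) = absv Fq a * absv Fq b := by
  by_cases ha : a = 0; · simp [ha, absv_zero']
  by_cases hb : b = 0; · simp [hb, absv_zero']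
  have hab : a * b ≠ 0 := mul_ne_zero ha hb
  have hq : (0:ℝ) < (Fintype.card Fq : ℝ) := by positivity
  unfold absv
  rw [if_neg ha, if_neg hb, if_neg hab, HahnSeries.order_mul ha hb, neg_add,
    zpow_add₀ (ne_of_gt hq)]

lemma oneq_lt : (1:ℝ) < (Fintype.card Fq : ℝ) := by
  exact_mod_cast Fintype.one_lt_card

lemma absv_add_le' (a b : Kinf Fq) :
    absv Fq (a + b) ≤ max (absv Fq a) (absv Fq b) := by
  by_cases hab : a + b = 0
  · simp [hab, absv_zero', le_max_iff]
    exact Or.inl (absv_nonneg' a)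
  by_cases ha : a = 0; · simp [ha]
  by_cases hb : b = 0; · simp [hb]
  have hmin : min a.order b.order ≤ (a + b).order :=
    HahnSeries.min_order_le_order_add hab
  have h1 : absv Fq (a + b) ≤ (Fintype.card Fq : ℝ) ^ (-(min a.order b.order)) := by
    unfold absv
    rw [if_neg hab]
    exact zpow_le_zpow_right₀ (le_of_lt oneq_lt) (neg_le_neg hmin)
  refine h1.trans ?_
  rcases le_total a.order b.order with h | h
  · rw [min_eq_left h]
    unfold absv
    rw [if_neg ha]
    exact le_max_left _ _
  · rw [min_eq_right h]
    unfold absv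
    rw [if_neg hb]
    exact le_max_right _ _

lemma absv_sum_lt' {ι : Type*} (t : Finset ι) (f : ι → Kinf Fq) {r : ℝ} (hr : 0 < r)
    (h : ∀ i ∈ t, absv Fq (f i) < r) : absv Fq (∑ i ∈ t, f i) < r := by
  classical
  induction t using Finset.induction_on with
  | empty => simpa [absv_zero'] using hr
  | @insert a s hx ih =>
    rw [Finset.sum_insert hx]
    calc absv Fq (f a + ∑ i ∈ s, f i) ≤ max (absv Fq (f a)) (absv Fq (∑ i ∈ s, f i)) :=
          absv_add_le' _ _
      _ < r := max_lt (h a (Finset.mem_insert_self a s))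
          (ih fun i hi => h i (Finset.mem_insert_of_mem hi))

lemma snorm_coord_le' {d : ℕ} (v : Fin d → Kinf Fq) (j : Fin d) :
    absv Fq (v j) ≤ snorm Fq v := by
  unfold snorm
  exact le_ciSup (f := fun i => absv Fq (v i)) (Set.Finite.bddAbove (Set.finite_range _)) j

end AuxForMain

/-- If `s ∈ S` is a combination of successive-minima vectors with coefficients in `𝔪`,
then `s = 0`. -/
theorem mem_frac_comb_eq_zero (d : ℕ) (w : Fin d → Fin d → Kinf Fq)
    (hli : LinearIndependent (Kinf Fq) w)
    (hmono : ∀ i j : Fin d, i ≤ j → snorm Fq (w i) ≤ snorm Fq (w j))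
    (S : Set (Fin d → Kinf Fq)) (hsub : IsSubspaceFq Fq S)
    (hmin : ∀ i : Fin d, ∀ s ∈ S,
      s ∉ Submodule.span (Kinf Fq) (w '' {j | j < i}) → snorm Fq (w i) ≤ snorm Fq s)
    (s : Fin d → Kinf Fq) (hs : s ∈ S) (γ : Fin d → Kinf Fq)
    (hγ : ∀ i, absv Fq (γ i) < 1) (heq : s = ∑ i, γ i • w i) :
    s = 0 := by
  classical
  by_contra hne
  -- there is a nonzero coefficient
  have hex : (Finset.univ.filter (fun i => γ i ≠ 0)).Nonempty := by
    by_contra h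
    rw [Finset.not_nonempty_iff_eq_empty, Finset.filter_eq_empty_iff] at h
    apply hne
    rw [heq]
    apply Finset.sum_eq_zero
    intro i _
    have : γ i = 0 := by
      by_contra hγi
      exact h (Finset.mem_univ i) hγi
    rw [this]; exact zero_smul (Kinf Fq) (A := Fin d → Kinf Fq) _
  set k : Fin d := (Finset.univ.filter (fun i => γ i ≠ 0)).max' hex with hkdef
  have hk : γ k ≠ 0 :=
    (Finset.mem_filter.mp ((Finset.univ.filter (fun i => γ i ≠ 0)).max'_mem hex)).2
  have hkmax : ∀ i, γ i ≠ 0 → i ≤ k := fun i hi =>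
    Finset.le_max' _ i (Finset.mem_filter.mpr ⟨Finset.mem_univ i, hi⟩)
  -- split the sum
  have hsplit : s = (∑ i ∈ Finset.univ.filter (· < k), γ i • w i) + γ k • w k := by
    rw [heq, ← Finset.sum_filter_add_sum_filter_not Finset.univ (· < k)]
    congr 1
    rw [Finset.sum_eq_single k]
    · intro i hi hik
      have hik' : ¬ i < k := (Finset.mem_filter.mp hi).2
      have : γ i = 0 := by
        by_contra hγi
        exact hik (le_antisymm (hkmax i hγi) (le_of_not_gt hik'))
      rw [this]; exact zero_smul (Kinf Fq) (A := Fin d → Kinf Fq) _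
    · intro hknot
      exact absurd (Finset.mem_filter.mpr ⟨Finset.mem_univ k, lt_irrefl k⟩) hknot
  -- s is not in the span of the first k vectors
  have hnot : s ∉ Submodule.span (Kinf Fq) (w '' {j | j < k}) := by
    intro hsmem
    have h1 : (∑ i ∈ Finset.univ.filter (· < k), γ i • w i) ∈
        Submodule.span (Kinf Fq) (w '' {j | j < k}) :=
      Submodule.sum_mem _ fun i hi => Submodule.smul_mem _ _
        (Submodule.subset_span ⟨i, by simpa using (Finset.mem_filter.mp hi).2, rfl⟩)
    have h2 : γ k • w k ∈ Submodule.span (Kinf Fq) (w '' {j | j < k}) := by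
      have : γ k • w k = s - (∑ i ∈ Finset.univ.filter (· < k), γ i • w i) := by
        rw [hsplit]; ring
      rw [this]
      exact Submodule.sub_mem _ hsmem h1
    have h3 : w k ∈ Submodule.span (Kinf Fq) (w '' {j | j < k}) := by
      have := Submodule.smul_mem _ (γ k)⁻¹ h2
      rwa [inv_smul_smul₀ hk] at this
    exact hli.notMem_span_image (by simp) h3
  have hmin' : snorm Fq (w k) ≤ snorm Fq s := hmin k s hs hnot
  -- positivity of snorm (w k)
  have hwk0 : w k ≠ 0 := hli.ne_zero k
  obtain ⟨j1, hj1⟩ : ∃ j, w k j ≠ 0 := by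
    by_contra h
    push_neg at h
    exact hwk0 (funext h)
  have hwkpos : 0 < snorm Fq (w k) :=
    lt_of_lt_of_le (absv_pos' hj1) (snorm_coord_le' _ j1)
  -- coordinatewise strict bound
  have hcoord : ∀ j, absv Fq (s j) < snorm Fq (w k) := by
    intro j
    have hsj : s j = ∑ i, γ i * w i j := by
      rw [heq]; simp [Finset.sum_apply]
    rw [hsj]
    apply absv_sum_lt' _ _ hwkpos
    intro i _
    by_cases hγi : γ i = 0
    · simpa [hγi, absv_zero'] using hwkpos
    · have hik : i ≤ k := hkmax i hγi
      have h1 : absv Fq (w i j) ≤ snorm Fq (w k) :=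
        (snorm_coord_le' (w i) j).trans (hmono i k hik)
      calc absv Fq (γ i * w i j) = absv Fq (γ i) * absv Fq (w i j) := absv_mul' _ _
        _ ≤ absv Fq (γ i) * snorm Fq (w k) :=
            mul_le_mul_of_nonneg_left h1 (absv_nonneg' _)
        _ < 1 * snorm Fq (w k) := by
            exact mul_lt_mul_of_pos_right (hγ i) hwkpos
        _ = snorm Fq (w k) := one_mul _
  -- conclude
  have hne' : Nonempty (Fin d) := ⟨k⟩
  obtain ⟨j0, hj0⟩ := Finite.exists_max (fun j => absv Fq (s j))
  have : snorm Fq s ≤ absv Fq (s j0) := ciSup_le hj0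
  have : snorm Fq s < snorm Fq (w k) := lt_of_le_of_lt this (hcoord j0)
  exact absurd hmin' (not_le.mpr this)


end
end

section
/- Let Λ ⊆ K∞^d be a lattice with basis of successive minima v⁽¹⁾, …, v⁽ᵈ⁾, let N ∈ ℕ, and let α = Σ α_i v⁽ⁱ⁾ be such that R_{≤N}·α_i ∩ R = {0} for each i (i.e., Qα_i is never a nonzero polynomial for 0 ≠ Q of degree ≤ N). Then there exist k ∈ {1,…,d}, indices ℓ₁ < … < ℓ_k, and polynomials Q₁, …, Q_k of degree ≤ N such that the k×k matrix M with entries M_{s,t} = ⟨Q_t α_{ℓ_s}⟩ satisfies 0 ≠ |det M| ≤ q^{-(N+1)}. -/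
open scoped Classical Pointwise

noncomputable section

variable (Fq : Type*) [Field Fq] [Fintype Fq]

lemma coeff_sum' {ι : Type*} (s : Finset ι) (f : ι → Kinf Fq) (n : ℤ) :
    (∑ i ∈ s, f i).coeff n = ∑ i ∈ s, (f i).coeff n :=
  map_sum (HahnSeries.coeff.addMonoidHom n) f s

lemma xe_pow (m : ℕ) : (xe Fq) ^ m = HahnSeries.single (-(m:ℤ)) (1:Fq) := by
  induction m with
  | zero => simp [xe]
  | succ k ih =>
      rw [pow_succ, ih, xe, HahnSeries.single_mul_single]
      push_cast; ring_nf

lemma algebraMap_eq_single (c : Fq) :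
    (algebraMap Fq (Kinf Fq)) c = HahnSeries.single (0:ℤ) c := by
  rw [HahnSeries.algebraMap_apply', PowerSeries.algebraMap_apply, Algebra.algebraMap_self,
    RingHom.id_apply, HahnSeries.ofPowerSeries_C, HahnSeries.C_apply]

lemma pe_monomial (m : ℕ) (c : Fq) :
    pe Fq (Polynomial.monomial m c) = HahnSeries.single (-(m:ℤ)) c := by
  rw [pe, Polynomial.aeval_monomial, xe_pow, algebraMap_eq_single,
    HahnSeries.single_mul_single]
  simp

lemma mem_Rset (β : Kinf Fq) (h : ∀ n : ℤ, 1 ≤ n → β.coeff n = 0) :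
    β ∈ Rset Fq := by
  by_cases hβ : β = 0
  · exact ⟨0, by simp [pe, hβ]⟩
  have ho : β.order ≤ 0 := by
    by_contra hlt
    exact (mt HahnSeries.coeff_order_eq_zero.mp hβ) (h _ (by omega))
  refine ⟨∑ n ∈ Finset.Icc β.order 0, Polynomial.monomial (-n).toNat (β.coeff n), ?_⟩
  rw [pe, map_sum]
  simp only [show ∀ P, (Polynomial.aeval (xe Fq)) P = pe Fq P from fun _ => rfl]
  ext m
  rw [coeff_sum']
  have : ∀ n ∈ Finset.Icc β.order 0,
      (pe Fq (Polynomial.monomial (-n).toNat (β.coeff n))).coeff m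
        = if m = n then β.coeff n else 0 := by
    intro n hn
    rw [pe_monomial]
    have hn0 : n ≤ 0 := (Finset.mem_Icc.mp hn).2
    have : (-(((-n).toNat : ℕ)) : ℤ) = n := by omega
    rw [this, HahnSeries.coeff_single]
    simp
  rw [Finset.sum_congr rfl this, Finset.sum_ite_eq]
  by_cases hm : m ∈ Finset.Icc β.order 0
  · simp [hm]
  · simp only [hm, if_false]
    rw [Finset.mem_Icc] at hm
    push_neg at hm
    by_cases h1 : β.order ≤ m
    · exact (h m (by omega)).symm
    · exact (HahnSeries.coeff_eq_zero_of_lt_order (by omega)).symm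

/-- Existence of a small nonzero minor of fractional parts `⟨Q_t α_{ℓ_s}⟩`. -/
theorem small_minor_exists (d : ℕ) (hd : 0 < d) (g : GL (Fin d) (Kinf Fq))
    (v : Fin d → Fin d → Kinf Fq) (hbasis : latt Fq g = Rspan Fq v)
    (hnorm : ∀ i : Fin d, snorm Fq (v i) = succMin Fq (snorm Fq) (latt Fq g) ((i : ℕ) + 1))
    (N : ℕ) (αc : Fin d → Kinf Fq)
    (hirr : ∀ i, ∀ Q : Polynomial Fq, Q ≠ 0 → Q.degree ≤ (N : ℕ) →
      pe Fq Q * αc i ∉ Rset Fq) :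
    ∃ (k : ℕ) (_ : 1 ≤ k) (_ : k ≤ d) (ℓ : Fin k → Fin d) (_ : StrictMono ℓ)
      (Q : Fin k → Polynomial Fq) (_ : ∀ t, (Q t).degree ≤ (N : ℕ)),
      absv Fq (Matrix.det
          (Matrix.of fun s t : Fin k => frac Fq (pe Fq (Q t) * αc (ℓ s)))) ≠ 0 ∧
      absv Fq (Matrix.det
          (Matrix.of fun s t : Fin k => frac Fq (pe Fq (Q t) * αc (ℓ s))))
        ≤ (Fintype.card Fq : ℝ) ^ (-(N + 1) : ℤ) := by
  classical
  set i0 : Fin d := ⟨0, hd⟩ with hi0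
  set α : Kinf Fq := αc i0 with hα
  set A : Matrix (Fin N) (Fin (N+1)) Fq :=
    Matrix.of fun j i => ((xe Fq) ^ (i:ℕ) * α).coeff ((j:ℤ)+1) with hA
  have hker : LinearMap.ker A.mulVecLin ≠ ⊥ := by
    apply LinearMap.ker_ne_bot_of_finrank_lt
    simp only [Module.finrank_pi]
    simp
  obtain ⟨c, hcA, hc0⟩ := Submodule.ne_bot_iff _ |>.mp hker
  rw [LinearMap.mem_ker] at hcA
  have hcA : A.mulVec c = 0 := hcA
  set Q0 : Polynomial Fq := ∑ i : Fin (N+1), Polynomial.monomial (i:ℕ) (c i) with hQ0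
  have hQdeg : Q0.degree ≤ (N:ℕ) := by
    refine (Polynomial.degree_sum_le _ _).trans (Finset.sup_le fun i _ => ?_)
    exact (Polynomial.degree_monomial_le _ _).trans
      (by exact_mod_cast Nat.cast_le.mpr (Nat.lt_succ_iff.mp i.isLt))
  have hQne : Q0 ≠ 0 := by
    obtain ⟨i, hi⟩ := Function.ne_iff.mp hc0
    intro h
    apply hi
    have h2 := congrArg (fun P => Polynomial.coeff P (i:ℕ)) h
    simp only [hQ0, Polynomial.finset_sum_coeff, Polynomial.coeff_monomial,
      Polynomial.coeff_zero] at h2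
    rwa [Finset.sum_eq_single i (fun b _ hb => by
        simp [if_neg (fun hh => hb (Fin.ext hh))])
      (fun hmem => absurd (Finset.mem_univ i) hmem), if_pos rfl] at h2
  set β : Kinf Fq := pe Fq Q0 * α with hβ
  have hpeQ0 : pe Fq Q0 = ∑ i : Fin (N+1), HahnSeries.single (-(i:ℤ)) (c i) := by
    rw [hQ0, pe, map_sum]
    simp only [show ∀ P, (Polynomial.aeval (xe Fq)) P = pe Fq P from fun _ => rfl]
    exact Finset.sum_congr rfl fun i _ => pe_monomial Fq _ _
  have hβcoeff : ∀ n : ℤ, β.coeff n = ∑ i : Fin (N+1), c i * ((xe Fq) ^ (i:ℕ) * α).coeff n := by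
    intro n
    rw [hβ, hpeQ0, Finset.sum_mul, coeff_sum']
    refine Finset.sum_congr rfl fun i _ => ?_
    have h1 : HahnSeries.single (-(i:ℤ)) (c i)
        = HahnSeries.single (0:ℤ) (c i) * (xe Fq) ^ (i:ℕ) := by
      rw [xe_pow, HahnSeries.single_mul_single]
      simp
    rw [h1, mul_assoc, HahnSeries.coeff_single_zero_mul]
  have hβco : ∀ n : ℤ, 1 ≤ n → n ≤ (N:ℤ) → β.coeff n = 0 := by
    intro n h1 h2
    set j : Fin N := ⟨(n-1).toNat, by omega⟩ with hj
    have hjn : ((j:ℕ):ℤ) + 1 = n := by simp [hj]; omega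
    have h3 := congrFun hcA j
    simp only [Matrix.mulVec, dotProduct, Pi.zero_apply] at h3
    rw [hβcoeff n, ← h3]
    refine Finset.sum_congr rfl fun i _ => ?_
    rw [hA]
    simp only [Matrix.of_apply, hjn]
    ring
  set γ : Kinf Fq := frac Fq β with hγ
  have hγcoeff : ∀ n : ℤ, γ.coeff n = if 1 ≤ n then β.coeff n else 0 := fun n => rfl
  have hγne : γ ≠ 0 := by
    intro h
    refine hirr i0 Q0 hQne hQdeg (mem_Rset Fq β fun n hn => ?_)
    have h2 : γ.coeff n = 0 := by rw [h]; rfl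
    rwa [hγcoeff, if_pos hn] at h2
  have horder : (N:ℤ) + 1 ≤ γ.order := by
    by_contra hlt
    push_neg at hlt
    apply (mt HahnSeries.coeff_order_eq_zero.mp hγne)
    rw [hγcoeff]
    by_cases h1 : 1 ≤ γ.order
    · rw [if_pos h1]
      exact hβco _ h1 (by omega)
    · rw [if_neg h1]
  have habs : absv Fq γ = (Fintype.card Fq : ℝ) ^ (-(γ.order)) := by
    rw [absv, if_neg hγne]
  have hq1 : (1:ℝ) < (Fintype.card Fq : ℝ) := by
    exact_mod_cast Fintype.one_lt_card
  refine ⟨1, le_refl 1, hd, fun _ => i0, fun a b hab =>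
      absurd (Subsingleton.elim a b) hab.ne, fun _ => Q0, fun _ => hQdeg, ?_, ?_⟩
  · rw [Matrix.det_fin_one]
    simp only [Matrix.of_apply]
    rw [← hα, ← hβ, ← hγ, habs]
    positivity
  · rw [Matrix.det_fin_one]
    simp only [Matrix.of_apply]
    rw [← hα, ← hβ, ← hγ, habs]
    refine zpow_le_zpow_right₀ hq1.le ?_
    push_cast
    omega


end
end
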